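/- Under the stated structure assumptions, there exists a constant c₂ > 0, depending only on n, s(G), s(H_a), s(H_b) and ν, such that for all x ∈ Ω, y ∈ ℝ and z₁, z₂ ∈ ℝⁿ∖{0}: |V_G(z₁) − V_G(z₂)|² + a(x)·|V_{H_a}(z₁) − V_{H_a}(z₂)|² + b(x)·|V_{H_b}(z₁) − V_{H_b}(z₂)|² + c₂·⟨D_zF(x,y,z₁), z₂ − z₁⟩ ≤ c₂·( F(x,y,z₂) − F(x,y,z₁) ), where ⟨·,·⟩ is the Euclidean inner product. -/

import Mathlib

/-!
Both sides are linear in the three phases, with weights `1, a(x), b(x) ≥ 0`, and the right-hand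
side is `c₂` times the Bregman distance `f(z₂) - f(z₁) - ⟪∇f(z₁), z₂ - z₁⟫`, so it suffices to
treat a single phase `Φ` with integrand `f`. Put `M = |z₁| + |z₂|`. The index condition gives the
classical bound `|V_Φ(z₁) - V_Φ(z₂)|² ≲ Φ'(M)/M · |z₁ - z₂|²`. Conversely, if the segment
`[z₁, z₂]` avoids the origin, ellipticity bounds the second derivative of `f` along it below by
`ν Φ(|z|)/|z|² · |z₂ - z₁|² ≳ ν Φ'(M)/M · |z₂ - z₁|²` on a subinterval of fixed length where
`|z| ≥ M/4`, and a second-order Taylor argument bounds the Bregman distance below by the same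
quantity. A segment through the origin is handled by moving `z₂` orthogonally to `z₁`, which
needs `n ≥ 2`, and passing to the limit.
-/

open Real Set Filter MeasureTheory
open scoped RealInnerProductSpace

/-- An N-function with index `s ≥ 1`: a function `Φ : [0,∞) → [0,∞)` with `Φ(0) = 0`,
strictly increasing and convex, `Φ(t)/t → 0` as `t → 0⁺`, `Φ(t)/t → ∞` as `t → ∞`,
continuously differentiable on `[0,∞)`, twice continuously differentiable on `(0,∞)`,
and `Φ'(t) > 0` with `(1/s)·Φ'(t) ≤ t·Φ''(t) ≤ s·Φ'(t)` for every `t > 0`. -/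
structure IsNFunction (Φ : ℝ → ℝ) (s : ℝ) : Prop where
  s_ge_one : 1 ≤ s
  nonneg : ∀ t, 0 ≤ t → 0 ≤ Φ t
  zero : Φ 0 = 0
  strictMonoOn : StrictMonoOn Φ (Ici 0)
  convexOn : ConvexOn ℝ (Ici 0) Φ
  tendsto_zero : Tendsto (fun t => Φ t / t) (nhdsWithin 0 (Ioi 0)) (nhds 0)
  tendsto_atTop : Tendsto (fun t => Φ t / t) atTop atTop
  contDiffOn_one : ContDiffOn ℝ 1 Φ (Ici 0)
  contDiffOn_two : ContDiffOn ℝ 2 Φ (Ioi 0)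
  deriv_pos : ∀ t, 0 < t → 0 < deriv Φ t
  index_lower : ∀ t, 0 < t → (1 / s) * deriv Φ t ≤ t * deriv (deriv Φ) t
  index_upper : ∀ t, 0 < t → t * deriv (deriv Φ) t ≤ s * deriv Φ t

/-- `V_Φ(z) := (Φ'(|z|)/|z|)^{1/2} · z` (equal to `0` at `z = 0`). -/
noncomputable def VPhi {n : ℕ} (Φ : ℝ → ℝ) (z : EuclideanSpace ℝ (Fin n)) :
    EuclideanSpace ℝ (Fin n) :=
  ((deriv Φ ‖z‖ / ‖z‖) ^ ((1 : ℝ) / 2)) • z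

/-- The modulus of continuity `ω : [0,∞) → [0,∞)` is either `t ↦ min (t^μ) 1` for some
`μ ∈ (0,1)`, or concave with `ω(0) = 0` and `ω ≤ 1`. -/
def OmegaCond (ω : ℝ → ℝ) : Prop :=
  (∀ t, 0 ≤ t → 0 ≤ ω t) ∧
  ((∃ μ : ℝ, 0 < μ ∧ μ < 1 ∧ ∀ t, 0 ≤ t → ω t = min (t ^ μ) 1) ∨
    (ConcaveOn ℝ (Ici 0) ω ∧ ω 0 = 0 ∧ ∀ t, 0 ≤ t → ω t ≤ 1))

/-- The structure assumptions (sa:2) on the integrand `FΦ` associated to the N-function `Φ`: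
`FΦ` is continuous on `Ω × ℝ × ℝⁿ` and `C²` in `z` away from `z = 0`, with growth,
ellipticity and continuity conditions, for constants `0 < ν ≤ L` and modulus `ω`. Here
`gradient (FΦ x y)` is the gradient in the `z`-variable and its (Fréchet) derivative is the
Hessian in `z`. -/
def StructCond (n : ℕ) (Ω : Set (EuclideanSpace ℝ (Fin n))) (ν L : ℝ) (ω : ℝ → ℝ)
    (Φ : ℝ → ℝ) (FΦ : EuclideanSpace ℝ (Fin n) → ℝ → EuclideanSpace ℝ (Fin n) → ℝ) :
    Prop :=
  ContinuousOn
      (fun p : EuclideanSpace ℝ (Fin n) × ℝ × EuclideanSpace ℝ (Fin n) =>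
        FΦ p.1 p.2.1 p.2.2)
      (Ω ×ˢ (Set.univ : Set (ℝ × EuclideanSpace ℝ (Fin n)))) ∧
  (∀ x ∈ Ω, ∀ y : ℝ, ContDiffOn ℝ 2 (FΦ x y) {z : EuclideanSpace ℝ (Fin n) | z ≠ 0}) ∧
  (∀ x ∈ Ω, ∀ y : ℝ, ∀ z : EuclideanSpace ℝ (Fin n), z ≠ 0 →
    ‖gradient (FΦ x y) z‖ * ‖z‖ + ‖fderiv ℝ (gradient (FΦ x y)) z‖ * ‖z‖ ^ 2
      ≤ L * Φ ‖z‖) ∧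
  (∀ x ∈ Ω, ∀ y : ℝ, ∀ z : EuclideanSpace ℝ (Fin n), z ≠ 0 →
    ∀ ξ : EuclideanSpace ℝ (Fin n),
      ν * (Φ ‖z‖ / ‖z‖ ^ 2) * ‖ξ‖ ^ 2 ≤ ⟪(fderiv ℝ (gradient (FΦ x y)) z) ξ, ξ⟫) ∧
  (∀ x₁ ∈ Ω, ∀ x₂ ∈ Ω, ∀ y : ℝ, ∀ z : EuclideanSpace ℝ (Fin n), z ≠ 0 →
    ‖gradient (FΦ x₁ y) z - gradient (FΦ x₂ y) z‖ * ‖z‖ ≤ L * ω ‖x₁ - x₂‖ * Φ ‖z‖) ∧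
  (∀ x ∈ Ω, ∀ y₁ y₂ : ℝ, ∀ z : EuclideanSpace ℝ (Fin n), z ≠ 0 →
    |FΦ x y₁ z - FΦ x y₂ z| ≤ L * ω |y₁ - y₂| * Φ ‖z‖)

open Topology

theorem mul_sub_le_sub_of_le_hasDerivAt {f f' : ℝ → ℝ} {a b C : ℝ} (hab : a ≤ b)
    (hf : ∀ x ∈ Icc a b, HasDerivAt f (f' x) x) (hC : ∀ x ∈ Ioo a b, C ≤ f' x) :
    C * (b - a) ≤ f b - f a := by
  have hf' : ∀ x ∈ Ioo a b, HasDerivAt f (f' x) x := fun x hx => hf x (Ioo_subset_Icc_self hx)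
  refine (convex_Icc a b).mul_sub_le_image_sub_of_le_deriv
    (fun x hx => (hf x hx).continuousAt.continuousWithinAt) ?_ ?_ a (left_mem_Icc.2 hab) b
    (right_mem_Icc.2 hab) hab
  · rw [interior_Icc]
    exact fun x hx => (hf' x hx).differentiableAt.differentiableWithinAt
  · rw [interior_Icc]
    exact fun x hx => (hf' x hx).deriv ▸ hC x hx

namespace IsNFunction

variable {Φ : ℝ → ℝ} {s : ℝ}

theorem hasDerivAt (h : IsNFunction Φ s) {t : ℝ} (ht : 0 < t) : HasDerivAt Φ (deriv Φ t) t :=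
  ((h.contDiffOn_two.differentiableOn two_ne_zero).differentiableAt
    (Ioi_mem_nhds ht)).hasDerivAt

theorem contDiffOn_deriv (h : IsNFunction Φ s) : ContDiffOn ℝ 1 (deriv Φ) (Ioi 0) :=
  h.contDiffOn_two.deriv_of_isOpen isOpen_Ioi (by norm_num)

theorem continuousOn_deriv (h : IsNFunction Φ s) : ContinuousOn (deriv Φ) (Ioi 0) :=
  h.contDiffOn_deriv.continuousOn

theorem hasDerivAt_deriv (h : IsNFunction Φ s) {t : ℝ} (ht : 0 < t) :
    HasDerivAt (deriv Φ) (deriv (deriv Φ) t) t :=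
  ((h.contDiffOn_deriv.differentiableOn one_ne_zero).differentiableAt
    (Ioi_mem_nhds ht)).hasDerivAt

theorem s_pos (h : IsNFunction Φ s) : 0 < s :=
  one_pos.trans_le h.s_ge_one

theorem deriv_deriv_pos (h : IsNFunction Φ s) {t : ℝ} (ht : 0 < t) :
    0 < deriv (deriv Φ) t := by
  have := h.index_lower t ht
  have : 0 < 1 / s * deriv Φ t := mul_pos (one_div_pos.2 h.s_pos) (h.deriv_pos t ht)
  exact pos_of_mul_pos_right (by linarith) ht.le

theorem deriv_le_deriv (h : IsNFunction Φ s) {r R : ℝ} (hr : 0 < r) (hrR : r ≤ R) :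
    deriv Φ r ≤ deriv Φ R := by
  have hmono : MonotoneOn (deriv Φ) (Ici r) :=
    monotoneOn_of_deriv_nonneg (convex_Ici r) (h.continuousOn_deriv.mono fun x hx =>
      hr.trans_le hx)
      (fun x hx => (h.hasDerivAt_deriv (hr.trans (by simpa using hx))).differentiableAt
        |>.differentiableWithinAt)
      (fun x hx => by
        rw [interior_Ici] at hx
        exact (h.deriv_deriv_pos (hr.trans hx)).le)
  exact hmono self_mem_Ici hrR hrR

/-- The upper index bound `t Φ'' ≤ s Φ'` makes `s log t - log Φ'(t)` nondecreasing. -/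
theorem deriv_le_rpow_mul_deriv (h : IsNFunction Φ s) {r R k : ℝ} (hr : 0 < r) (hrR : r ≤ R)
    (hRk : R ≤ k * r) : deriv Φ R ≤ k ^ s * deriv Φ r := by
  have hR : 0 < R := hr.trans_le hrR
  let w : ℝ → ℝ := fun t => s * log t - log (deriv Φ t)
  have hw : ∀ t, 0 < t → HasDerivAt w (s * t⁻¹ - deriv (deriv Φ) t / deriv Φ t) t := fun t ht =>
    ((hasDerivAt_log ht.ne').const_mul s).sub
      ((h.hasDerivAt_deriv ht).log (h.deriv_pos t ht).ne')
  have hmono : MonotoneOn w (Ioi 0) := by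
    refine monotoneOn_of_deriv_nonneg (convex_Ioi 0)
      (fun t ht => (hw t ht).continuousAt.continuousWithinAt)
      (fun t ht => (hw t (by simpa using ht)).differentiableAt.differentiableWithinAt)
      (fun t ht => ?_)
    rw [interior_Ioi] at ht
    rw [(hw t ht).deriv, sub_nonneg, div_le_iff₀ (h.deriv_pos t ht), ← div_eq_mul_inv,
      div_mul_eq_mul_div, le_div_iff₀ ht, mul_comm]
    exact h.index_upper t ht
  have hlog : log (deriv Φ R) ≤ s * log (R / r) + log (deriv Φ r) := by
    have := hmono hr hR hrR
    rw [log_div hR.ne' hr.ne']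
    simp only [w] at this
    linarith
  calc deriv Φ R = exp (log (deriv Φ R)) := (exp_log (h.deriv_pos R hR)).symm
    _ ≤ exp (s * log (R / r) + log (deriv Φ r)) := exp_le_exp.2 hlog
    _ = (R / r) ^ s * deriv Φ r := by
      rw [exp_add, exp_log (h.deriv_pos r hr), rpow_def_of_pos (div_pos hR hr), mul_comm s]
    _ ≤ k ^ s * deriv Φ r := by
      gcongr
      · exact (h.deriv_pos r hr).le
      · exact h.s_pos.le
      · rwa [div_le_iff₀ hr]

theorem mul_deriv_le (h : IsNFunction Φ s) {t : ℝ} (ht : 0 < t) :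
    t * deriv Φ t ≤ 2 * 2 ^ s * Φ t := by
  have ht2 : 0 < t / 2 := half_pos ht
  have hslope : deriv Φ (t / 2) * (t - t / 2) ≤ Φ t - Φ (t / 2) :=
    mul_sub_le_sub_of_le_hasDerivAt (by linarith)
      (fun x hx => h.hasDerivAt (ht2.trans_le hx.1))
      (fun x hx => h.deriv_le_deriv ht2 hx.1.le)
  have hdoubling : deriv Φ t ≤ 2 ^ s * deriv Φ (t / 2) :=
    h.deriv_le_rpow_mul_deriv ht2 (by linarith) (by linarith)
  have := h.nonneg (t / 2) ht2.le
  have := rpow_pos_of_pos two_pos s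
  nlinarith

theorem abs_deriv_div_sub_le (h : IsNFunction Φ s) {r₁ r₂ : ℝ} (hr₂ : 0 < r₂)
    (hr : r₂ ≤ r₁) :
    |deriv Φ r₁ / r₁ - deriv Φ r₂ / r₂| ≤ s * deriv Φ r₁ / r₂ ^ 2 * (r₁ - r₂) := by
  have hderiv : ∀ x ∈ Icc r₂ r₁, HasDerivAt (fun t => deriv Φ t / t)
      ((deriv (deriv Φ) x * x - deriv Φ x * 1) / x ^ 2) x := fun x hx =>
    (h.hasDerivAt_deriv (hr₂.trans_le hx.1)).div (hasDerivAt_id x)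
      (hr₂.trans_le hx.1).ne'
  refine norm_image_sub_le_of_norm_deriv_le_segment' (fun x hx => (hderiv x hx).hasDerivWithinAt)
    (fun x hx => ?_) r₁ (right_mem_Icc.2 hr)
  have hx0 : 0 < x := hr₂.trans_le hx.1
  have hlow := h.index_lower x hx0
  have hup := h.index_upper x hx0
  have hnum : |deriv (deriv Φ) x * x - deriv Φ x * 1| ≤ s * deriv Φ r₁ := by
    have : 0 ≤ 1 / s * deriv Φ x := by positivity [h.s_pos, h.deriv_pos x hx0]
    have : deriv Φ x ≤ deriv Φ r₁ := h.deriv_le_deriv hx0 hx.2.le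
    have := h.s_ge_one
    have := h.deriv_pos x hx0
    rw [abs_le]
    constructor <;> nlinarith
  rw [Real.norm_eq_abs, abs_div, abs_of_pos (pow_pos hx0 2)]
  exact div_le_div₀ (hnum.trans' (abs_nonneg _)) hnum (pow_pos hr₂ 2)
    (pow_le_pow_left₀ hr₂.le hx.1 2)

theorem abs_deriv_div_sub_mul_le (h : IsNFunction Φ s) {r₁ r₂ d : ℝ} (hr₂ : 0 < r₂)
    (hle : r₂ ≤ r₁) (hnear : r₁ ≤ 2 * r₂) (hd : r₁ - r₂ ≤ d) :
    |deriv Φ r₁ / r₁ - deriv Φ r₂ / r₂| * (r₁ + r₂)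
      ≤ 9 * s * (deriv Φ (r₁ + r₂) / (r₁ + r₂)) * d := by
  have hr₁ : 0 < r₁ := hr₂.trans_le hle
  set M := r₁ + r₂
  have hM : 0 < M := by positivity
  set Δ := |deriv Φ r₁ / r₁ - deriv Φ r₂ / r₂|
  have hslope : Δ * r₂ ^ 2 ≤ s * deriv Φ M * d := by
    have hmvt := h.abs_deriv_div_sub_le hr₂ hle
    rw [div_mul_eq_mul_div, le_div_iff₀ (by positivity)] at hmvt
    have := h.s_pos
    have := h.deriv_pos M hM
    calc Δ * r₂ ^ 2 ≤ s * deriv Φ r₁ * (r₁ - r₂) := hmvt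
      _ ≤ s * deriv Φ M * d := by
        gcongr
        exact h.deriv_le_deriv hr₁ (le_add_of_nonneg_right hr₂.le)
  have hM3 : M ^ 2 ≤ 9 * r₂ ^ 2 := by nlinarith
  have : Δ * M * M ≤ 9 * s * (deriv Φ M / M) * d * M :=
    calc Δ * M * M = Δ * M ^ 2 := by ring
      _ ≤ Δ * (9 * r₂ ^ 2) := by gcongr
      _ ≤ 9 * (s * deriv Φ M * d) := by linarith
      _ = 9 * s * (deriv Φ M / M) * d * M := by field_simp
  exact le_of_mul_le_mul_right this hM

/-- With `qᵢ = Φ'(rᵢ)/rᵢ`, doubling gives `q₁ ≥ 2⁻ˢ Φ'(r₁ + r₂)/(r₁ + r₂)`, so `√q₁` stays away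
from `0` and `|√q₁ - √q₂| ≤ |q₁ - q₂| / √q₁`. -/
theorem abs_sqrt_deriv_div_sub_mul_sq_le (h : IsNFunction Φ s) {r₁ r₂ d : ℝ} (hr₂ : 0 < r₂)
    (hle : r₂ ≤ r₁) (hnear : r₁ ≤ 2 * r₂) (hd : r₁ - r₂ ≤ d) :
    (|√(deriv Φ r₁ / r₁) - √(deriv Φ r₂ / r₂)| * r₁) ^ 2
      ≤ 81 * s ^ 2 * 2 ^ s * (deriv Φ (r₁ + r₂) / (r₁ + r₂)) * d ^ 2 := by
  have hr₁ : 0 < r₁ := hr₂.trans_le hle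
  set M := r₁ + r₂
  have hM : 0 < M := by positivity
  set A := deriv Φ M / M
  have hA : 0 < A := div_pos (h.deriv_pos M hM) hM
  set q₁ := deriv Φ r₁ / r₁
  set q₂ := deriv Φ r₂ / r₂
  have hq₁ : 0 ≤ q₁ := (div_pos (h.deriv_pos r₁ hr₁) hr₁).le
  have hq₂ : 0 ≤ q₂ := (div_pos (h.deriv_pos r₂ hr₂) hr₂).le
  have hAq₁ : A ≤ 2 ^ s * q₁ := by
    have hdoubling : deriv Φ M ≤ 2 ^ s * deriv Φ r₁ :=
      h.deriv_le_rpow_mul_deriv hr₁ (by simp [M, hr₂.le]) (by linarith)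
    rw [← mul_div_assoc]
    have := h.deriv_pos r₁ hr₁
    exact div_le_div₀ (by positivity) hdoubling hr₁ (by simp [M, hr₂.le])
  have hψ : |√q₁ - √q₂| * √q₁ ≤ |q₁ - q₂| := by
    conv_rhs => rw [← sq_sqrt hq₁, ← sq_sqrt hq₂, sq_sub_sq, abs_mul, mul_comm,
      abs_of_nonneg (a := √q₁ + √q₂) (by positivity)]
    gcongr
    exact le_add_of_nonneg_right (sqrt_nonneg _)
  have key : (|√q₁ - √q₂| * r₁) ^ 2 * A ≤ 81 * s ^ 2 * 2 ^ s * A * d ^ 2 * A :=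
    calc (|√q₁ - √q₂| * r₁) ^ 2 * A ≤ (|√q₁ - √q₂| * r₁) ^ 2 * (2 ^ s * √q₁ ^ 2) := by
          rw [sq_sqrt hq₁]; gcongr
      _ = 2 ^ s * ((|√q₁ - √q₂| * √q₁) * r₁) ^ 2 := by ring
      _ ≤ 2 ^ s * (|q₁ - q₂| * M) ^ 2 := by
          gcongr
          simp [M, hr₂.le]
      _ ≤ 2 ^ s * (9 * s * A * d) ^ 2 := by
          have := h.s_pos
          have := h.abs_deriv_div_sub_mul_le hr₂ hle hnear hd
          gcongr
      _ = 81 * s ^ 2 * 2 ^ s * A * d ^ 2 * A := by ring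
  exact le_of_mul_le_mul_right key hA

theorem deriv_div_le_mul_div_sq (h : IsNFunction Φ s) {r M : ℝ} (hr : 0 < r) (hrM : r ≤ M)
    (hMr : M ≤ 4 * r) : deriv Φ M / M ≤ 2 * 8 ^ s * (Φ r / r ^ 2) := by
  have hdoubling : deriv Φ M ≤ 4 ^ s * deriv Φ r := h.deriv_le_rpow_mul_deriv hr hrM hMr
  have hΦ := h.mul_deriv_le hr
  have h8 : (8 : ℝ) ^ s = 2 ^ s * 4 ^ s := by
    rw [← mul_rpow (by norm_num) (by norm_num)]; norm_num
  have := h.deriv_pos r hr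
  calc deriv Φ M / M ≤ 4 ^ s * deriv Φ r / r := div_le_div₀ (by positivity) hdoubling hr hrM
    _ = 4 ^ s * (r * deriv Φ r) / r ^ 2 := by field_simp
    _ ≤ 4 ^ s * (2 * 2 ^ s * Φ r) / r ^ 2 := by gcongr
    _ = 2 * 8 ^ s * (Φ r / r ^ 2) := by rw [h8]; ring

end IsNFunction

section VPhi

variable {n : ℕ} {Φ : ℝ → ℝ} {s : ℝ}

theorem VPhi_eq_sqrt_smul (Φ : ℝ → ℝ) (z : EuclideanSpace ℝ (Fin n)) :
    VPhi Φ z = √(deriv Φ ‖z‖ / ‖z‖) • z := by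
  rw [VPhi, sqrt_eq_rpow]

theorem norm_VPhi_sub_le (Φ : ℝ → ℝ) (z₁ z₂ : EuclideanSpace ℝ (Fin n)) :
    ‖VPhi Φ z₁ - VPhi Φ z₂‖ ≤ |√(deriv Φ ‖z₁‖ / ‖z₁‖) - √(deriv Φ ‖z₂‖ / ‖z₂‖)| * ‖z₁‖
      + √(deriv Φ ‖z₂‖ / ‖z₂‖) * ‖z₁ - z₂‖ := by
  set ψ₁ := √(deriv Φ ‖z₁‖ / ‖z₁‖)
  set ψ₂ := √(deriv Φ ‖z₂‖ / ‖z₂‖)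
  have hsplit : VPhi Φ z₁ - VPhi Φ z₂ = (ψ₁ - ψ₂) • z₁ + ψ₂ • (z₁ - z₂) := by
    rw [VPhi_eq_sqrt_smul, VPhi_eq_sqrt_smul]
    module
  rw [hsplit]
  refine (norm_add_le _ _).trans_eq ?_
  rw [norm_smul, norm_smul, Real.norm_eq_abs, Real.norm_of_nonneg (sqrt_nonneg _)]

namespace IsNFunction

theorem norm_VPhi_sq (h : IsNFunction Φ s) {z : EuclideanSpace ℝ (Fin n)} (hz : z ≠ 0) :
    ‖VPhi Φ z‖ ^ 2 = deriv Φ ‖z‖ * ‖z‖ := by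
  have hr : 0 < ‖z‖ := norm_pos_iff.2 hz
  rw [VPhi_eq_sqrt_smul, norm_smul, mul_pow, Real.norm_of_nonneg (sqrt_nonneg _),
    sq_sqrt (div_pos (h.deriv_pos _ hr) hr).le]
  field_simp

theorem norm_VPhi_sub_sq_le_of_two_mul_le (h : IsNFunction Φ s)
    {z₁ z₂ : EuclideanSpace ℝ (Fin n)} (hz₁ : z₁ ≠ 0) (hz₂ : z₂ ≠ 0)
    (hfar : 2 * ‖z₂‖ ≤ ‖z₁‖) :
    ‖VPhi Φ z₁ - VPhi Φ z₂‖ ^ 2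
      ≤ 36 * (deriv Φ (‖z₁‖ + ‖z₂‖) / (‖z₁‖ + ‖z₂‖)) * ‖z₁ - z₂‖ ^ 2 := by
  have hr₁ : 0 < ‖z₁‖ := norm_pos_iff.2 hz₁
  have hr₂ : 0 < ‖z₂‖ := norm_pos_iff.2 hz₂
  set M := ‖z₁‖ + ‖z₂‖
  have hM : 0 < M := by positivity
  have hbound : ∀ r, 0 < r → r ≤ M → deriv Φ r * r ≤ deriv Φ M * M := fun r hr hrM =>
    mul_le_mul (h.deriv_le_deriv hr hrM) hrM hr.le (h.deriv_pos M hM).le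
  have hM3 : M ≤ 3 * ‖z₁ - z₂‖ := by linarith [norm_sub_norm_le z₁ z₂]
  have htri : ‖VPhi Φ z₁ - VPhi Φ z₂‖ ^ 2 ≤ 2 * ‖VPhi Φ z₁‖ ^ 2 + 2 * ‖VPhi Φ z₂‖ ^ 2 := by
    nlinarith [norm_sub_le (VPhi Φ z₁) (VPhi Φ z₂), norm_nonneg (VPhi Φ z₁ - VPhi Φ z₂),
      sq_nonneg (‖VPhi Φ z₁‖ - ‖VPhi Φ z₂‖)]
  calc ‖VPhi Φ z₁ - VPhi Φ z₂‖ ^ 2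
      ≤ 2 * (deriv Φ ‖z₁‖ * ‖z₁‖) + 2 * (deriv Φ ‖z₂‖ * ‖z₂‖) := by
        rwa [← h.norm_VPhi_sq hz₁, ← h.norm_VPhi_sq hz₂]
    _ ≤ 4 * (deriv Φ M / M) * M ^ 2 := by
        have := hbound _ hr₁ (by simp [M, hr₂.le])
        have := hbound _ hr₂ (by simp [M, hr₁.le])
        have : 4 * (deriv Φ M / M) * M ^ 2 = 4 * (deriv Φ M * M) := by field_simp
        linarith
    _ ≤ 4 * (deriv Φ M / M) * (3 * ‖z₁ - z₂‖) ^ 2 := by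
        have := h.deriv_pos M hM
        gcongr
    _ = 36 * (deriv Φ M / M) * ‖z₁ - z₂‖ ^ 2 := by ring

theorem norm_VPhi_sub_sq_le_of_le_two_mul (h : IsNFunction Φ s)
    {z₁ z₂ : EuclideanSpace ℝ (Fin n)} (hz₂ : z₂ ≠ 0) (hle : ‖z₂‖ ≤ ‖z₁‖)
    (hnear : ‖z₁‖ ≤ 2 * ‖z₂‖) :
    ‖VPhi Φ z₁ - VPhi Φ z₂‖ ^ 2
      ≤ (162 * s ^ 2 * 2 ^ s + 6) * (deriv Φ (‖z₁‖ + ‖z₂‖) / (‖z₁‖ + ‖z₂‖))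
        * ‖z₁ - z₂‖ ^ 2 := by
  have hr₂ : 0 < ‖z₂‖ := norm_pos_iff.2 hz₂
  set M := ‖z₁‖ + ‖z₂‖
  have hM : 0 < M := by positivity
  set q₂ := deriv Φ ‖z₂‖ / ‖z₂‖
  have hq₂ : 0 ≤ q₂ := (div_pos (h.deriv_pos _ hr₂) hr₂).le
  have hangle := h.abs_sqrt_deriv_div_sub_mul_sq_le hr₂ hle hnear (norm_sub_norm_le z₁ z₂)
  have hradial : (√q₂ * ‖z₁ - z₂‖) ^ 2 ≤ 3 * (deriv Φ M / M) * ‖z₁ - z₂‖ ^ 2 := by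
    have : q₂ ≤ deriv Φ M / (M / 3) :=
      div_le_div₀ (h.deriv_pos M hM).le (h.deriv_le_deriv hr₂ (by simp [M]))
        (by positivity) (by linarith)
    rw [mul_pow, sq_sqrt hq₂]
    gcongr
    rwa [div_div_eq_mul_div, mul_div_right_comm, mul_comm] at this
  have htri := norm_VPhi_sub_le Φ z₁ z₂
  nlinarith [norm_nonneg (VPhi Φ z₁ - VPhi Φ z₂),
    sq_nonneg (|√(deriv Φ ‖z₁‖ / ‖z₁‖) - √q₂| * ‖z₁‖ - √q₂ * ‖z₁ - z₂‖)]

theorem norm_VPhi_sub_sq_le (h : IsNFunction Φ s) {z₁ z₂ : EuclideanSpace ℝ (Fin n)}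
    (hz₁ : z₁ ≠ 0) (hz₂ : z₂ ≠ 0) :
    ‖VPhi Φ z₁ - VPhi Φ z₂‖ ^ 2
      ≤ (162 * s ^ 2 * 2 ^ s + 36) * (deriv Φ (‖z₁‖ + ‖z₂‖) / (‖z₁‖ + ‖z₂‖))
        * ‖z₂ - z₁‖ ^ 2 := by
  wlog hle : ‖z₂‖ ≤ ‖z₁‖ generalizing z₁ z₂
  · have := this hz₂ hz₁ (le_of_not_ge hle)
    rwa [norm_sub_rev (VPhi Φ z₂), add_comm ‖z₂‖, norm_sub_rev z₁] at this
  rw [norm_sub_rev z₂]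
  have hM : 0 < ‖z₁‖ + ‖z₂‖ := by positivity [norm_pos_iff.2 hz₁]
  have hAd : 0 ≤ deriv Φ (‖z₁‖ + ‖z₂‖) / (‖z₁‖ + ‖z₂‖) * ‖z₁ - z₂‖ ^ 2 :=
    mul_nonneg (div_pos (h.deriv_pos _ hM) hM).le (sq_nonneg _)
  have : 0 ≤ 162 * s ^ 2 * 2 ^ s := by positivity
  rcases le_total (2 * ‖z₂‖) ‖z₁‖ with hfar | hnear
  · have := h.norm_VPhi_sub_sq_le_of_two_mul_le hz₁ hz₂ hfar
    nlinarith
  · have := h.norm_VPhi_sub_sq_le_of_le_two_mul hz₂ hle hnear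
    nlinarith

end IsNFunction

end VPhi

theorem mul_mul_le_sub_sub_of_hasDerivAt {g p H : ℝ → ℝ} {a b m : ℝ} (ha : 0 ≤ a)
    (hab : a ≤ b) (hb : b ≤ 1) (hg : ∀ t ∈ Icc (0 : ℝ) 1, HasDerivAt g (p t) t)
    (hp : ∀ t ∈ Icc (0 : ℝ) 1, HasDerivAt p (H t) t) (hH : ∀ t ∈ Icc (0 : ℝ) 1, 0 ≤ H t)
    (hm : ∀ t ∈ Icc a b, m ≤ H t) :
    m * (b - a) * (1 - b) ≤ g 1 - g 0 - p 0 := by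
  have hpmono : ∀ x y, 0 ≤ x → x ≤ y → y ≤ 1 → p x ≤ p y := fun x y hx hxy hy => by
    have := mul_sub_le_sub_of_le_hasDerivAt hxy
      (fun t ht => hp t ⟨hx.trans ht.1, ht.2.trans hy⟩)
      (fun t ht => hH t ⟨hx.trans ht.1.le, ht.2.le.trans hy⟩)
    linarith
  have hjump : m * (b - a) ≤ p b - p a := mul_sub_le_sub_of_le_hasDerivAt hab
    (fun t ht => hp t ⟨ha.trans ht.1, ht.2.trans hb⟩) (fun t ht => hm t (Ioo_subset_Icc_self ht))
  have hbefore : p 0 * (b - 0) ≤ g b - g 0 := mul_sub_le_sub_of_le_hasDerivAt (ha.trans hab)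
    (fun t ht => hg t ⟨ht.1, ht.2.trans hb⟩)
    (fun t ht => hpmono 0 t le_rfl ht.1.le (ht.2.le.trans hb))
  have hafter : (p 0 + m * (b - a)) * (1 - b) ≤ g 1 - g b := mul_sub_le_sub_of_le_hasDerivAt hb
    (fun t ht => hg t ⟨(ha.trans hab).trans ht.1, ht.2⟩)
    fun t ht => by
      have := hpmono 0 a le_rfl ha (hab.trans hb)
      have := hpmono b t (ha.trans hab) ht.1.le ht.2.le
      linarith
  linear_combination hbefore + hafter

section Segment

variable {E : Type*} [NormedAddCommGroup E] [NormedSpace ℝ E]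

theorem norm_add_smul_sub_le (z₁ z₂ : E) {t : ℝ} (ht : t ∈ Icc (0 : ℝ) 1) :
    ‖z₁ + t • (z₂ - z₁)‖ ≤ ‖z₁‖ + ‖z₂‖ := by
  have hconv : z₁ + t • (z₂ - z₁) = (1 - t) • z₁ + t • z₂ := by module
  rw [hconv]
  refine (norm_add_le _ _).trans ?_
  rw [norm_smul, norm_smul, Real.norm_of_nonneg (by linarith [ht.2]),
    Real.norm_of_nonneg ht.1]
  nlinarith [norm_nonneg z₁, norm_nonneg z₂, ht.1, ht.2]

theorem norm_add_norm_le_four_mul_norm_add_smul_sub {z₁ z₂ : E} (hle : ‖z₂‖ ≤ ‖z₁‖) {t : ℝ}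
    (ht : t ∈ Icc (0 : ℝ) (1 / 4)) : ‖z₁‖ + ‖z₂‖ ≤ 4 * ‖z₁ + t • (z₂ - z₁)‖ := by
  have hstart : ‖z₁‖ ≤ ‖z₁ + t • (z₂ - z₁)‖ + t * ‖z₂ - z₁‖ :=
    calc ‖z₁‖ = ‖(z₁ + t • (z₂ - z₁)) - t • (z₂ - z₁)‖ := by simp
      _ ≤ ‖z₁ + t • (z₂ - z₁)‖ + ‖t • (z₂ - z₁)‖ := norm_sub_le _ _
      _ = ‖z₁ + t • (z₂ - z₁)‖ + t * ‖z₂ - z₁‖ := by rw [norm_smul, Real.norm_of_nonneg ht.1]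
  nlinarith [norm_sub_le z₂ z₁, norm_nonneg (z₂ - z₁), ht.1, ht.2]

theorem exists_Icc_forall_norm_add_norm_le_four_mul_norm (z₁ z₂ : E) :
    ∃ a b : ℝ, 0 ≤ a ∧ a ≤ b ∧ b ≤ 1 ∧ 1 / 64 ≤ (b - a) * (1 - b) ∧
      ∀ t ∈ Icc a b, ‖z₁‖ + ‖z₂‖ ≤ 4 * ‖z₁ + t • (z₂ - z₁)‖ := by
  rcases le_total ‖z₂‖ ‖z₁‖ with hle | hle
  · refine ⟨0, 1 / 4, le_rfl, by norm_num, by norm_num, by norm_num, fun t ht => ?_⟩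
    exact norm_add_norm_le_four_mul_norm_add_smul_sub hle ht
  · refine ⟨3 / 4, 7 / 8, by norm_num, by norm_num, by norm_num, by norm_num, fun t ht => ?_⟩
    have := norm_add_norm_le_four_mul_norm_add_smul_sub hle (t := 1 - t)
      ⟨by linarith [ht.2], by linarith [ht.1]⟩
    rwa [add_comm, show z₂ + (1 - t) • (z₁ - z₂) = z₁ + t • (z₂ - z₁) by module] at this

theorem hasDerivAt_comp_add_smul {F : Type*} [NormedAddCommGroup F] [NormedSpace ℝ F]
    {g : E → F} {x v : E} {t : ℝ} (hg : DifferentiableAt ℝ g (x + t • v)) :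
    HasDerivAt (fun t : ℝ => g (x + t • v)) (fderiv ℝ g (x + t • v) v) t :=
  hg.hasFDerivAt.comp_hasDerivAt t (by simpa using ((hasDerivAt_id t).smul_const v).const_add x)

end Segment

section Perturbation

variable {E : Type*} [NormedAddCommGroup E] [InnerProductSpace ℝ E]

theorem exists_ne_zero_inner_eq_zero (hE : 2 ≤ Module.finrank ℝ E) (z : E) :
    ∃ w : E, w ≠ 0 ∧ ⟪z, w⟫ = 0 := by
  have : FiniteDimensional ℝ E := Module.finite_of_finrank_pos (by omega)
  have hdim := Submodule.finrank_add_finrank_orthogonal (ℝ ∙ z)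
  have hline : Module.finrank ℝ (ℝ ∙ z) ≤ 1 := by simpa using finrank_span_le_card ({z} : Set E)
  obtain ⟨⟨w, hw⟩, hw0⟩ := Module.finrank_pos_iff_exists_ne_zero.1
    (show 0 < Module.finrank ℝ (ℝ ∙ z)ᗮ by omega)
  exact ⟨w, by simpa using hw0,
    Submodule.inner_right_of_mem_orthogonal (Submodule.mem_span_singleton_self z) hw⟩

/-- Moving `z₂` off the line through `z₁`, orthogonally to `z₁` and to the side where
`⟪z₂, w⟫ ≥ 0`, keeps every segment from `z₁` away from the origin. -/
theorem exists_forall_pos_zero_notMem_segment_add_smul (hE : 2 ≤ Module.finrank ℝ E)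
    {z₁ : E} (hz₁ : z₁ ≠ 0) (z₂ : E) :
    ∃ w : E, ∀ ε : ℝ, 0 < ε → (0 : E) ∉ segment ℝ z₁ (z₂ + ε • w) := by
  obtain ⟨w, hw0, hz₁w⟩ := exists_ne_zero_inner_eq_zero hE z₁
  have key : ∀ w : E, w ≠ 0 → ⟪z₁, w⟫ = 0 → 0 ≤ ⟪z₂, w⟫ →
      ∀ ε : ℝ, 0 < ε → (0 : E) ∉ segment ℝ z₁ (z₂ + ε • w) := by
    intro w hw0 hz₁w hz₂w ε hε
    rw [segment_eq_image']
    rintro ⟨t, -, h0⟩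
    have hinner := congrArg (fun u => ⟪u, w⟫) h0
    simp only [inner_add_left, inner_smul_left, inner_sub_left, hz₁w, real_inner_self_eq_norm_sq,
      conj_trivial, inner_zero_left, zero_add, sub_zero] at hinner
    have hpos : 0 < ⟪z₂, w⟫ + ε * ‖w‖ ^ 2 := by positivity [norm_pos_iff.2 hw0]
    obtain rfl : t = 0 := by
      rcases mul_eq_zero.1 (show t * (⟪z₂, w⟫ + ε * ‖w‖ ^ 2) = 0 by linarith) with ht | ht
      · exact ht
      · exact absurd ht hpos.ne'
    exact hz₁ (by simpa using h0)
  rcases le_total 0 ⟪z₂, w⟫ with hz₂w | hz₂w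
  · exact ⟨w, key w hw0 hz₁w hz₂w⟩
  · exact ⟨-w, key (-w) (neg_ne_zero.2 hw0) (by simp [hz₁w]) (by simpa using hz₂w)⟩

end Perturbation

section Bregman

variable {E : Type*} [NormedAddCommGroup E] [InnerProductSpace ℝ E] [CompleteSpace E]
  {Φ : ℝ → ℝ} {s ν : ℝ} {f : E → ℝ}

theorem ContDiffOn.differentiableAt_gradient {U : Set E} (hf : ContDiffOn ℝ 2 f U)
    (hU : IsOpen U) {z : E} (hz : z ∈ U) : DifferentiableAt ℝ (gradient f) z :=
  (((InnerProductSpace.toDual ℝ E).symm.contDiff.comp_contDiffOn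
    (hf.fderiv_of_isOpen (m := 1) hU (by norm_num))).differentiableOn one_ne_zero).differentiableAt
    (hU.mem_nhds hz)

theorem hasDerivAt_comp_add_smul_inner_gradient {x v : E} {t : ℝ}
    (hf : DifferentiableAt ℝ f (x + t • v)) :
    HasDerivAt (fun t : ℝ => f (x + t • v)) ⟪gradient f (x + t • v), v⟫ t := by
  rw [inner_gradient_left]
  exact hasDerivAt_comp_add_smul hf

theorem hasDerivAt_inner_gradient_comp_add_smul {x v : E} {t : ℝ}
    (hf : DifferentiableAt ℝ (gradient f) (x + t • v)) :
    HasDerivAt (fun t : ℝ => ⟪gradient f (x + t • v), v⟫)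
      ⟪fderiv ℝ (gradient f) (x + t • v) v, v⟫ t := by
  simpa using (hasDerivAt_comp_add_smul hf).inner ℝ (hasDerivAt_const t v)

noncomputable def bregman (f : E → ℝ) (z₁ z₂ : E) : ℝ :=
  f z₂ - f z₁ - ⟪gradient f z₁, z₂ - z₁⟫

theorem bregman_add {g : E → ℝ} {z₁ : E} (hf : DifferentiableAt ℝ f z₁)
    (hg : DifferentiableAt ℝ g z₁) (z₂ : E) :
    bregman (fun z => f z + g z) z₁ z₂ = bregman f z₁ z₂ + bregman g z₁ z₂ := by
  simp only [bregman, inner_gradient_left, fderiv_fun_add hf hg, add_apply]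
  ring

theorem bregman_const_mul {z₁ : E} (hf : DifferentiableAt ℝ f z₁) (c : ℝ) (z₂ : E) :
    bregman (fun z => c * f z) z₁ z₂ = c * bregman f z₁ z₂ := by
  simp only [bregman, inner_gradient_left, fderiv_const_mul hf, smul_apply, smul_eq_mul]
  ring

theorem bregman_add_mul_add_mul {g k : E → ℝ} {z₁ : E} (hf : DifferentiableAt ℝ f z₁)
    (hg : DifferentiableAt ℝ g z₁) (hk : DifferentiableAt ℝ k z₁) (α β : ℝ) (z₂ : E) :
    bregman (fun z => f z + α * g z + β * k z) z₁ z₂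
      = bregman f z₁ z₂ + α * bregman g z₁ z₂ + β * bregman k z₁ z₂ := by
  rw [bregman_add (f := fun z => f z + α * g z) (hf.add (hg.const_mul α)) (hk.const_mul β),
    bregman_add hf (hg.const_mul α), bregman_const_mul hg, bregman_const_mul hk]

theorem IsNFunction.mul_deriv_div_mul_sq_le_bregman (h : IsNFunction Φ s) (hν : 0 ≤ ν)
    (hf : ContDiffOn ℝ 2 f {z | z ≠ 0})
    (hell : ∀ z : E, z ≠ 0 → ∀ ξ,
      ν * (Φ ‖z‖ / ‖z‖ ^ 2) * ‖ξ‖ ^ 2 ≤ ⟪(fderiv ℝ (gradient f) z) ξ, ξ⟫)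
    {z₁ z₂ : E} (hseg : (0 : E) ∉ segment ℝ z₁ z₂) :
    ν * (deriv Φ (‖z₁‖ + ‖z₂‖) / (‖z₁‖ + ‖z₂‖)) * ‖z₂ - z₁‖ ^ 2
      ≤ 128 * 8 ^ s * bregman f z₁ z₂ := by
  rw [segment_eq_image'] at hseg
  have hγ : ∀ t ∈ Icc (0 : ℝ) 1, z₁ + t • (z₂ - z₁) ≠ 0 := fun t ht h0 => hseg ⟨t, ht, h0⟩
  have hz₁ : z₁ ≠ 0 := by simpa using hγ 0 (left_mem_Icc.2 zero_le_one)
  have hU : IsOpen {z : E | z ≠ 0} := isOpen_ne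
  set v := z₂ - z₁
  set M := ‖z₁‖ + ‖z₂‖
  have hM : 0 < M := by positivity [norm_pos_iff.2 hz₁]
  have hP := h.deriv_pos M hM
  set m := ν * (deriv Φ M / M / (2 * 8 ^ s)) * ‖v‖ ^ 2
  obtain ⟨a, b, ha, hab, hb, hlen, hfar⟩ := exists_Icc_forall_norm_add_norm_le_four_mul_norm z₁ z₂
  have hH : ∀ t ∈ Icc (0 : ℝ) 1, ν * (Φ ‖z₁ + t • v‖ / ‖z₁ + t • v‖ ^ 2) * ‖v‖ ^ 2
      ≤ ⟪fderiv ℝ (gradient f) (z₁ + t • v) v, v⟫ := fun t ht => hell _ (hγ t ht) v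
  have hH0 : ∀ t ∈ Icc (0 : ℝ) 1, 0 ≤ ⟪fderiv ℝ (gradient f) (z₁ + t • v) v, v⟫ :=
    fun t ht => (hH t ht).trans' (by have := h.nonneg _ (norm_nonneg (z₁ + t • v)); positivity)
  have hHm : ∀ t ∈ Icc a b, m ≤ ⟪fderiv ℝ (gradient f) (z₁ + t • v) v, v⟫ := fun t ht => by
    have ht01 : t ∈ Icc (0 : ℝ) 1 := Icc_subset_Icc ha hb ht
    have hbound : deriv Φ M / M / (2 * 8 ^ s) ≤ Φ ‖z₁ + t • v‖ / ‖z₁ + t • v‖ ^ 2 := by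
      rw [div_le_iff₀' (by positivity)]
      exact h.deriv_div_le_mul_div_sq (norm_pos_iff.2 (hγ t ht01))
        (norm_add_smul_sub_le z₁ z₂ ht01) (hfar t ht)
    exact (hH t ht01).trans'
      (mul_le_mul_of_nonneg_right (mul_le_mul_of_nonneg_left hbound hν) (sq_nonneg _))
  have hmain : m * ((b - a) * (1 - b)) ≤ bregman f z₁ z₂ := by
    have := mul_mul_le_sub_sub_of_hasDerivAt ha hab hb
      (fun t ht => hasDerivAt_comp_add_smul_inner_gradient
        ((hf.differentiableOn two_ne_zero).differentiableAt (hU.mem_nhds (hγ t ht))))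
      (fun t ht => hasDerivAt_inner_gradient_comp_add_smul
        (hf.differentiableAt_gradient hU (hγ t ht))) hH0 hHm
    simp only [zero_smul, add_zero, one_smul] at this
    rwa [show z₁ + v = z₂ from add_sub_cancel z₁ z₂, mul_assoc] at this
  calc ν * (deriv Φ M / M) * ‖v‖ ^ 2 = 128 * 8 ^ s * (m * (1 / 64)) := by
        simp only [m]; field_simp; ring
    _ ≤ 128 * 8 ^ s * (m * ((b - a) * (1 - b))) := by gcongr
    _ ≤ 128 * 8 ^ s * bregman f z₁ z₂ := by gcongr

theorem IsNFunction.mul_deriv_div_mul_sq_le_bregman_of_ne_zero (h : IsNFunction Φ s)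
    (hν : 0 ≤ ν) (hE : 2 ≤ Module.finrank ℝ E) (hf : ContDiffOn ℝ 2 f {z | z ≠ 0})
    (hell : ∀ z : E, z ≠ 0 → ∀ ξ,
      ν * (Φ ‖z‖ / ‖z‖ ^ 2) * ‖ξ‖ ^ 2 ≤ ⟪(fderiv ℝ (gradient f) z) ξ, ξ⟫)
    {z₁ z₂ : E} (hz₁ : z₁ ≠ 0) (hz₂ : z₂ ≠ 0) :
    ν * (deriv Φ (‖z₁‖ + ‖z₂‖) / (‖z₁‖ + ‖z₂‖)) * ‖z₂ - z₁‖ ^ 2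
      ≤ 128 * 8 ^ s * bregman f z₁ z₂ := by
  obtain ⟨w, hw⟩ := exists_forall_pos_zero_notMem_segment_add_smul hE hz₁ z₂
  have hpert : Tendsto (fun ε : ℝ => z₂ + ε • w) (𝓝[>] 0) (𝓝 z₂) := by
    have : Tendsto (fun ε : ℝ => z₂ + ε • w) (𝓝 0) (𝓝 (z₂ + (0 : ℝ) • w)) :=
      (by fun_prop : Continuous fun ε : ℝ => z₂ + ε • w).tendsto 0
    rw [zero_smul, add_zero] at this
    exact this.mono_left nhdsWithin_le_nhds
  have hM : 0 < ‖z₁‖ + ‖z₂‖ := by positivity [norm_pos_iff.2 hz₁]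
  have hlhs : ContinuousAt
      (fun z => ν * (deriv Φ (‖z₁‖ + ‖z‖) / (‖z₁‖ + ‖z‖)) * ‖z - z₁‖ ^ 2) z₂ := by
    have hΦ' : ContinuousAt (fun z : E => deriv Φ (‖z₁‖ + ‖z‖)) z₂ :=
      (h.continuousOn_deriv.continuousAt (Ioi_mem_nhds hM)).comp (f := fun z : E => ‖z₁‖ + ‖z‖)
        (by fun_prop)
    exact (continuousAt_const.mul (hΦ'.div (by fun_prop) hM.ne')).mul (by fun_prop)
  have hrhs : ContinuousAt (fun z => 128 * 8 ^ s * bregman f z₁ z) z₂ := by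
    have := hf.continuousOn.continuousAt (isOpen_ne.mem_nhds hz₂)
    unfold bregman
    fun_prop
  exact le_of_tendsto_of_tendsto (hlhs.tendsto.comp hpert) (hrhs.tendsto.comp hpert)
    (eventually_nhdsWithin_of_forall fun ε hε =>
      h.mul_deriv_div_mul_sq_le_bregman hν hf hell (hw ε hε))

end Bregman

noncomputable def vBregmanConst (s ν : ℝ) : ℝ :=
  (162 * s ^ 2 * 2 ^ s + 36) * 128 * 8 ^ s / ν

theorem vBregmanConst_pos (s : ℝ) {ν : ℝ} (hν : 0 < ν) : 0 < vBregmanConst s ν := by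
  unfold vBregmanConst
  positivity

theorem IsNFunction.norm_VPhi_sub_sq_le_mul_bregman {n : ℕ} (hn : 2 ≤ n) {Φ : ℝ → ℝ}
    {s ν : ℝ} (h : IsNFunction Φ s) (hν : 0 < ν) {f : EuclideanSpace ℝ (Fin n) → ℝ}
    (hf : ContDiffOn ℝ 2 f {z | z ≠ 0})
    (hell : ∀ z : EuclideanSpace ℝ (Fin n), z ≠ 0 → ∀ ξ,
      ν * (Φ ‖z‖ / ‖z‖ ^ 2) * ‖ξ‖ ^ 2 ≤ ⟪(fderiv ℝ (gradient f) z) ξ, ξ⟫)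
    {c : ℝ} (hc : vBregmanConst s ν ≤ c) {z₁ z₂ : EuclideanSpace ℝ (Fin n)} (hz₁ : z₁ ≠ 0)
    (hz₂ : z₂ ≠ 0) :
    ‖VPhi Φ z₁ - VPhi Φ z₂‖ ^ 2 ≤ c * bregman f z₁ z₂ := by
  have hV := h.norm_VPhi_sub_sq_le hz₁ hz₂
  have hB := h.mul_deriv_div_mul_sq_le_bregman_of_ne_zero hν.le (by simpa using hn) hf hell
    hz₁ hz₂
  have hVB : ‖VPhi Φ z₁ - VPhi Φ z₂‖ ^ 2 ≤ vBregmanConst s ν * bregman f z₁ z₂ :=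
    calc ‖VPhi Φ z₁ - VPhi Φ z₂‖ ^ 2
        ≤ (162 * s ^ 2 * 2 ^ s + 36) * (deriv Φ (‖z₁‖ + ‖z₂‖) / (‖z₁‖ + ‖z₂‖))
          * ‖z₂ - z₁‖ ^ 2 := hV
      _ = (162 * s ^ 2 * 2 ^ s + 36) / ν
          * (ν * (deriv Φ (‖z₁‖ + ‖z₂‖) / (‖z₁‖ + ‖z₂‖)) * ‖z₂ - z₁‖ ^ 2) := by
        field_simp
      _ ≤ (162 * s ^ 2 * 2 ^ s + 36) / ν * (128 * 8 ^ s * bregman f z₁ z₂) := by gcongr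
      _ = vBregmanConst s ν * bregman f z₁ z₂ := by unfold vBregmanConst; ring
  have hB0 : 0 ≤ bregman f z₁ z₂ :=
    (mul_nonneg_iff_of_pos_left (vBregmanConst_pos s hν)).1 ((sq_nonneg _).trans hVB)
  exact hVB.trans (mul_le_mul_of_nonneg_right hc hB0)

section StructCond

variable {n : ℕ} {Ω : Set (EuclideanSpace ℝ (Fin n))} {ν L : ℝ} {ω Φ : ℝ → ℝ}
  {F : EuclideanSpace ℝ (Fin n) → ℝ → EuclideanSpace ℝ (Fin n) → ℝ}
  {x : EuclideanSpace ℝ (Fin n)}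

theorem StructCond.differentiableAt (hS : StructCond n Ω ν L ω Φ F) (hx : x ∈ Ω) (y : ℝ)
    {z : EuclideanSpace ℝ (Fin n)} (hz : z ≠ 0) : DifferentiableAt ℝ (F x y) z :=
  ((hS.2.1 x hx y).differentiableOn two_ne_zero).differentiableAt (isOpen_ne.mem_nhds hz)

theorem StructCond.norm_VPhi_sub_sq_le_mul_bregman (hS : StructCond n Ω ν L ω Φ F)
    (hn : 2 ≤ n) {s : ℝ} (hΦ : IsNFunction Φ s) (hν : 0 < ν) {c : ℝ}
    (hc : vBregmanConst s ν ≤ c) (hx : x ∈ Ω) (y : ℝ) {z₁ z₂ : EuclideanSpace ℝ (Fin n)}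
    (hz₁ : z₁ ≠ 0) (hz₂ : z₂ ≠ 0) :
    ‖VPhi Φ z₁ - VPhi Φ z₂‖ ^ 2 ≤ c * bregman (F x y) z₁ z₂ :=
  hΦ.norm_VPhi_sub_sq_le_mul_bregman hn hν (hS.2.1 x hx y) (hS.2.2.2.1 x hx y) hc hz₁ hz₂

end StructCond

theorem statement15_general (n : ℕ) (hn : 2 ≤ n)
    (sG sHa sHb ν : ℝ) (hν : 0 < ν) :
    ∃ c₂ : ℝ, 0 < c₂ ∧
      ∀ (Ω : Set (EuclideanSpace ℝ (Fin n))), IsOpen Ω →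
      ∀ (G Ha Hb : ℝ → ℝ),
        IsNFunction G sG → IsNFunction Ha sHa → IsNFunction Hb sHb →
      ∀ (a b : EuclideanSpace ℝ (Fin n) → ℝ),
        (∀ x ∈ Ω, 0 ≤ a x) → (∀ x ∈ Ω, 0 ≤ b x) →
        (∃ M, ∀ x ∈ Ω, a x ≤ M) → (∃ M, ∀ x ∈ Ω, b x ≤ M) →
      ∀ (L : ℝ), ν ≤ L →
      ∀ (ω : ℝ → ℝ), OmegaCond ω →
      ∀ (FG FHa FHb : EuclideanSpace ℝ (Fin n) → ℝ → EuclideanSpace ℝ (Fin n) → ℝ),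
        StructCond n Ω ν L ω G FG → StructCond n Ω ν L ω Ha FHa →
        StructCond n Ω ν L ω Hb FHb →
        (∀ x ∈ Ω, ∀ y : ℝ, ∀ z : EuclideanSpace ℝ (Fin n),
          ν * (G ‖z‖ + a x * Ha ‖z‖ + b x * Hb ‖z‖)
              ≤ FG x y z + a x * FHa x y z + b x * FHb x y z ∧
            FG x y z + a x * FHa x y z + b x * FHb x y z
              ≤ L * (G ‖z‖ + a x * Ha ‖z‖ + b x * Hb ‖z‖)) →
      ∀ x ∈ Ω, ∀ y : ℝ, ∀ z₁ z₂ : EuclideanSpace ℝ (Fin n), z₁ ≠ 0 → z₂ ≠ 0 →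
        ‖VPhi G z₁ - VPhi G z₂‖ ^ 2 + a x * ‖VPhi Ha z₁ - VPhi Ha z₂‖ ^ 2
            + b x * ‖VPhi Hb z₁ - VPhi Hb z₂‖ ^ 2
            + c₂ * ⟪gradient (fun z => FG x y z + a x * FHa x y z + b x * FHb x y z) z₁,
                z₂ - z₁⟫
          ≤ c₂ * ((FG x y z₂ + a x * FHa x y z₂ + b x * FHb x y z₂)
              - (FG x y z₁ + a x * FHa x y z₁ + b x * FHb x y z₁)) := by
  have hcG := vBregmanConst_pos sG hν
  have hcHa := vBregmanConst_pos sHa hν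
  have hcHb := vBregmanConst_pos sHb hν
  set c := vBregmanConst sG ν + vBregmanConst sHa ν + vBregmanConst sHb ν
  refine ⟨c, by positivity, ?_⟩
  intro Ω _ G Ha Hb hG hHa hHb a b ha hb _ _ L _ ω _ FG FHa FHb hSG hSHa hSHb _
    x hx y z₁ z₂ hz₁ hz₂
  have hsum : ‖VPhi G z₁ - VPhi G z₂‖ ^ 2 + a x * ‖VPhi Ha z₁ - VPhi Ha z₂‖ ^ 2
      + b x * ‖VPhi Hb z₁ - VPhi Hb z₂‖ ^ 2
      ≤ c * bregman (fun z => FG x y z + a x * FHa x y z + b x * FHb x y z) z₁ z₂ := by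
    rw [bregman_add_mul_add_mul (hSG.differentiableAt hx y hz₁) (hSHa.differentiableAt hx y hz₁)
      (hSHb.differentiableAt hx y hz₁), mul_add, mul_add, mul_left_comm c (a x),
      mul_left_comm c (b x)]
    have := ha x hx
    have := hb x hx
    gcongr
    exacts [hSG.norm_VPhi_sub_sq_le_mul_bregman hn hG hν (by linarith) hx y hz₁ hz₂,
      hSHa.norm_VPhi_sub_sq_le_mul_bregman hn hHa hν (by linarith) hx y hz₁ hz₂,
      hSHb.norm_VPhi_sub_sq_le_mul_bregman hn hHb hν (by linarith) hx y hz₁ hz₂]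
  unfold bregman at hsum
  linarith

/-- Under the multi-phase structure assumptions there is `c₂ > 0`,
depending only on `n, s(G), s(H_a), s(H_b), ν`, such that
`|V_G(z₁)−V_G(z₂)|² + a(x)|V_{H_a}(z₁)−V_{H_a}(z₂)|² + b(x)|V_{H_b}(z₁)−V_{H_b}(z₂)|²
  + c₂·⟨D_zF(x,y,z₁), z₂ − z₁⟩ ≤ c₂·(F(x,y,z₂) − F(x,y,z₁))` for `x ∈ Ω`, `y ∈ ℝ`,
`z₁, z₂ ∈ ℝⁿ∖{0}`, where `F = F_G + a·F_{H_a} + b·F_{H_b}`. -/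
theorem statement15 (n : ℕ) (hn : 2 ≤ n)
    (sG sHa sHb ν : ℝ) (hsG : 1 ≤ sG) (hsHa : 1 ≤ sHa) (hsHb : 1 ≤ sHb) (hν : 0 < ν) :
    ∃ c₂ : ℝ, 0 < c₂ ∧
      ∀ (Ω : Set (EuclideanSpace ℝ (Fin n))), IsOpen Ω →
      ∀ (G Ha Hb : ℝ → ℝ),
        IsNFunction G sG → IsNFunction Ha sHa → IsNFunction Hb sHb →
      ∀ (a b : EuclideanSpace ℝ (Fin n) → ℝ),
        (∀ x ∈ Ω, 0 ≤ a x) → (∀ x ∈ Ω, 0 ≤ b x) →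
        (∃ M, ∀ x ∈ Ω, a x ≤ M) → (∃ M, ∀ x ∈ Ω, b x ≤ M) →
      ∀ (L : ℝ), ν ≤ L →
      ∀ (ω : ℝ → ℝ), OmegaCond ω →
      ∀ (FG FHa FHb : EuclideanSpace ℝ (Fin n) → ℝ → EuclideanSpace ℝ (Fin n) → ℝ),
        StructCond n Ω ν L ω G FG → StructCond n Ω ν L ω Ha FHa →
        StructCond n Ω ν L ω Hb FHb →
        (∀ x ∈ Ω, ∀ y : ℝ, ∀ z : EuclideanSpace ℝ (Fin n),
          ν * (G ‖z‖ + a x * Ha ‖z‖ + b x * Hb ‖z‖)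
              ≤ FG x y z + a x * FHa x y z + b x * FHb x y z ∧
            FG x y z + a x * FHa x y z + b x * FHb x y z
              ≤ L * (G ‖z‖ + a x * Ha ‖z‖ + b x * Hb ‖z‖)) →
      ∀ x ∈ Ω, ∀ y : ℝ, ∀ z₁ z₂ : EuclideanSpace ℝ (Fin n), z₁ ≠ 0 → z₂ ≠ 0 →
        ‖VPhi G z₁ - VPhi G z₂‖ ^ 2 + a x * ‖VPhi Ha z₁ - VPhi Ha z₂‖ ^ 2
            + b x * ‖VPhi Hb z₁ - VPhi Hb z₂‖ ^ 2
            + c₂ * ⟪gradient (fun z => FG x y z + a x * FHa x y z + b x * FHb x y z) z₁,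
                z₂ - z₁⟫
          ≤ c₂ * ((FG x y z₂ + a x * FHa x y z₂ + b x * FHb x y z₂)
              - (FG x y z₁ + a x * FHa x y z₁ + b x * FHb x y z₁)) :=
  statement15_general n hn sG sHa sHb ν hν
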